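/- In $W_n$ (for $n \geq 2$), with $m_n = a_{n-1} \cdot (x_{n-2})^{x_n}$, the identity $x_n^2 = v_{n-4} \cdot [x_n, m_n]^{-1}$ holds, where $v_{n-4} = x_{n-2}^2$; equivalently $x_n^2 [x_n, m_n] = x_{n-2}^2$. -/

import Mathlib

/-- Leaves of the complete binary rooted tree of height `n`, recorded as the
big-endian bit string of the (0-indexed) leaf label. -/
abbrev Leaf (n : ℕ) := Fin n → Bool

/-- The function underlying the standard generator `a k` of `Aut(T_n)`:
it flips coordinate `n - k` of a leaf lying on the leftmost spine above level `n - k`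
(this is the permutation `(1, 2^(k-1)+1)(2, 2^(k-1)+2) ⋯ (2^(k-1), 2^k)` of the leaves). -/
def aFun (n k : ℕ) (ℓ : Leaf n) : Leaf n := fun t =>
  if (t : ℕ) = n - k ∧ (∀ s : Fin n, (s : ℕ) < n - k → ℓ s = false) then !(ℓ t) else ℓ t

lemma aFun_apply (n k : ℕ) (ℓ : Leaf n) (t : Fin n) :
    aFun n k ℓ t =
      if (t : ℕ) = n - k ∧ (∀ s : Fin n, (s : ℕ) < n - k → ℓ s = false) then !(ℓ t) else ℓ t :=
  rfl

lemma aFun_spine (n k : ℕ) (ℓ : Leaf n) (s : Fin n) (hs : (s : ℕ) < n - k) :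
    aFun n k ℓ s = ℓ s := by
  rw [aFun_apply, if_neg]
  rintro ⟨h1, -⟩
  omega

lemma aFun_cond (n k : ℕ) (ℓ : Leaf n) (t : Fin n) :
    ((t : ℕ) = n - k ∧ (∀ s : Fin n, (s : ℕ) < n - k → aFun n k ℓ s = false)) ↔
    ((t : ℕ) = n - k ∧ (∀ s : Fin n, (s : ℕ) < n - k → ℓ s = false)) := by
  constructor
  · rintro ⟨h1, h2⟩
    refine ⟨h1, fun s hs => ?_⟩
    have h := h2 s hs
    rwa [aFun_spine n k ℓ s hs] at h
  · rintro ⟨h1, h2⟩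
    refine ⟨h1, fun s hs => ?_⟩
    rw [aFun_spine n k ℓ s hs]
    exact h2 s hs

lemma aFun_involutive (n k : ℕ) : Function.Involutive (aFun n k) := by
  intro ℓ
  funext t
  rw [show aFun n k (aFun n k ℓ) t =
    (if (t : ℕ) = n - k ∧ (∀ s : Fin n, (s : ℕ) < n - k → aFun n k ℓ s = false)
      then !(aFun n k ℓ t) else aFun n k ℓ t) from rfl]
  by_cases h : (t : ℕ) = n - k ∧ (∀ s : Fin n, (s : ℕ) < n - k → ℓ s = false)
  · rw [if_pos ((aFun_cond n k ℓ t).mpr h), aFun_apply, if_pos h, Bool.not_not]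
  · rw [if_neg (fun hc => h ((aFun_cond n k ℓ t).mp hc)), aFun_apply, if_neg h]

/-- The standard generator `a_k` of `Aut(T_n)` (as a permutation of the leaves). -/
def aPerm (n k : ℕ) : Equiv.Perm (Leaf n) :=
  Function.Involutive.toPerm (aFun n k) (aFun_involutive n k)

lemma aPerm_apply (n k : ℕ) (ℓ : Leaf n) : aPerm n k ℓ = aFun n k ℓ := rfl

/-- The automorphism group `W_n` of the complete binary rooted tree of height `n`,
realized as the subgroup of permutations of the `2^n` leaves which, at every level `m`,
map leaves agreeing in their first `m` coordinates to leaves agreeing in their first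
`m` coordinates. -/
def treeGroup (n : ℕ) : Subgroup (Equiv.Perm (Leaf n)) where
  carrier := {σ | ∀ m : ℕ, ∀ i j : Leaf n,
    (∀ t : Fin n, (t : ℕ) < m → σ i t = σ j t) ↔ (∀ t : Fin n, (t : ℕ) < m → i t = j t)}
  one_mem' := by intro m i j; simp
  mul_mem' := by
    intro a b ha hb m i j
    simpa [Equiv.Perm.mul_apply] using (ha m (b i) (b j)).trans (hb m i j)
  inv_mem' := by
    intro a ha m i j
    simpa using (ha m (a⁻¹ i) (a⁻¹ j)).symm

lemma mem_treeGroup (n : ℕ) (σ : Equiv.Perm (Leaf n)) :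
    σ ∈ treeGroup n ↔ ∀ m : ℕ, ∀ i j : Leaf n,
      (∀ t : Fin n, (t : ℕ) < m → σ i t = σ j t) ↔ (∀ t : Fin n, (t : ℕ) < m → i t = j t) :=
  Iff.rfl

lemma aPerm_mem (n k : ℕ) : aPerm n k ∈ treeGroup n := by
  have D : ∀ (i j : Leaf n) (m : ℕ), (∀ t : Fin n, (t : ℕ) < m → i t = j t) →
      (∀ t : Fin n, (t : ℕ) < m → aFun n k i t = aFun n k j t) := by
    intro i j m hij t ht
    rw [aFun_apply, aFun_apply]
    by_cases h1 : (t : ℕ) = n - k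
    · have hsp : (∀ s : Fin n, (s : ℕ) < n - k → i s = false) ↔
          (∀ s : Fin n, (s : ℕ) < n - k → j s = false) := by
        constructor
        · intro h s hs
          rw [← hij s (by omega)]; exact h s hs
        · intro h s hs
          rw [hij s (by omega)]; exact h s hs
      by_cases h2 : ∀ s : Fin n, (s : ℕ) < n - k → i s = false
      · rw [if_pos ⟨h1, h2⟩, if_pos ⟨h1, hsp.mp h2⟩, hij t ht]
      · rw [if_neg (fun hc => h2 hc.2), if_neg (fun hc => h2 (hsp.mpr hc.2)), hij t ht]
    · rw [if_neg (fun hc => h1 hc.1), if_neg (fun hc => h1 hc.1), hij t ht]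
  rw [mem_treeGroup]
  intro m i j
  constructor
  · intro h t ht
    have h2 := D (aPerm n k i) (aPerm n k j) m (fun t ht => by
      simpa [aPerm_apply] using h t ht) t ht
    rwa [show aFun n k (aPerm n k i) = i from aFun_involutive n k i,
      show aFun n k (aPerm n k j) = j from aFun_involutive n k j] at h2
  · intro h t ht
    simpa [aPerm_apply] using D i j m h t ht

/-- The standard generator `a_k` as an element of `W_n`. -/
def aEl (n k : ℕ) : ↥(treeGroup n) := ⟨aPerm n k, aPerm_mem n k⟩

/-- The standard `k`-odometer `x_k = a_1 a_2 ⋯ a_k`, viewed inside `W_n`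
(via the natural inclusion of `W_k` acting on the left part of the tree). -/
def xEl (n k : ℕ) : ↥(treeGroup n) :=
  (((List.range k).map fun j => aEl n (j + 1))).prod

/-- `v_i = x_{i+2}^2`, viewed inside `W_n`. -/
def vEl (n i : ℕ) : ↥(treeGroup n) := (xEl n (i + 2)) ^ 2

/-- `m_n = a_{n-1} (x_{n-2})^{x_n}` (with `g^h = h g h⁻¹`), viewed inside `W_n`. -/
def mEl (n : ℕ) : ↥(treeGroup n) :=
  aEl n (n - 1) * (xEl n n * xEl n (n - 2) * (xEl n n)⁻¹)

/-- A permutation of the leaves of `T_n` is an `n`-odometer if it acts transitively on them. -/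
def IsOdometer (n : ℕ) (σ : Equiv.Perm (Leaf n)) : Prop :=
  ∀ i j : Leaf n, ∃ t : ℕ, (σ ^ t) i = j

/-- The generating set `{v_i : i ≤ k - 3}` of `V_k`, inside `W_n`. -/
def VsetK (n k : ℕ) : Set ↥(treeGroup n) := {g | ∃ i : ℕ, i + 3 ≤ k ∧ g = vEl n i}

/-- The subgroup `V_k = ⟨v_{k-3}, …, v_0⟩ ≤ W_n`. -/
def VgrpK (n k : ℕ) : Subgroup ↥(treeGroup n) := Subgroup.closure (VsetK n k)

/-- The group `M_k = ⟨x_k, v_{k-3}, …, v_0⟩` of Section 4, inside `W_n`. -/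
def MgrpK (n k : ℕ) : Subgroup ↥(treeGroup n) :=
  Subgroup.closure (insert (xEl n k) (VsetK n k))

/-- The normal closure `N_k = V_k^{M_k}` of `V_k` in `M_k`, inside `W_n`. -/
def NgrpK (n k : ℕ) : Subgroup ↥(treeGroup n) :=
  Subgroup.closure {g | ∃ m ∈ MgrpK n k, ∃ v ∈ VsetK n k, g = m * v * m⁻¹}

/-- The group `M_n = ⟨x_n, m_n, v_{n-3}, …, v_0⟩` of Section 5. -/
def MgrpB (n : ℕ) : Subgroup ↥(treeGroup n) :=
  Subgroup.closure (insert (xEl n n) (insert (mEl n) (VsetK n n)))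

/-- The normal closure `N_n = ⟨m_n, v_{n-3}, …, v_0⟩^{M_n}` of Section 5. -/
def NgrpB (n : ℕ) : Subgroup ↥(treeGroup n) :=
  Subgroup.closure {g | ∃ m ∈ MgrpB n, ∃ h ∈ insert (mEl n) (VsetK n n), g = m * h * m⁻¹}

/-- `U_n = V_n^{⟨x_n⟩}`. -/
def Ugrp (n : ℕ) : Subgroup ↥(treeGroup n) :=
  Subgroup.closure {g | ∃ m ∈ Subgroup.closure {xEl n n}, ∃ v ∈ VsetK n n, g = m * v * m⁻¹}

/-!
Label the leaves of `T_n` by natural numbers read modulo `2 ^ n`, coordinate `t` being bit `t`.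
Then `x_k` adds `2 ^ (n - k)` to the labels divisible by `2 ^ (n - k)` and fixes the others, so
`x_n` is `v ↦ v + 1` and `x_{n-2}` adds `4` to multiples of `4`, while `a_{n-1}` swaps
`4q` and `4q + 2`. The identity `x_n³ m_n = x_{n-2}² m_n x_n` then becomes an identity between
piecewise affine maps of `ℕ`, checked on each residue class modulo `4`.
-/

def leafOfNat (n v : ℕ) : Leaf n := fun t => v.testBit t

/-- The action of `a_k` on leaf labels, with `m = n - k`. -/
def aNat (m v : ℕ) : ℕ := if 2 ^ m ∣ v then v ^^^ 2 ^ m else v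

/-- The action of `x_k` on leaf labels, with `m = n - k`. -/
def xNat (m v : ℕ) : ℕ := if 2 ^ m ∣ v then v + 2 ^ m else v

lemma two_pow_dvd_iff_testBit {m v : ℕ} : 2 ^ m ∣ v ↔ ∀ i < m, v.testBit i = false := by
  rw [Nat.dvd_iff_mod_eq_zero]
  constructor
  · intro h i hi
    simpa [hi, h] using Nat.testBit_mod_two_pow v m i
  · intro h
    exact Nat.eq_of_testBit_eq fun i => by by_cases hi : i < m <;> simp [hi, h]

lemma two_pow_succ_dvd_two_pow_mul_iff {m q : ℕ} : 2 ^ (m + 1) ∣ 2 ^ m * q ↔ 2 ∣ q := by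
  rw [pow_succ, Nat.mul_dvd_mul_iff_left (Nat.two_pow_pos m)]

lemma two_pow_mul_xor_two_pow (m q : ℕ) : 2 ^ m * q ^^^ 2 ^ m = 2 ^ m * (q ^^^ 1) := by
  rw [mul_comm, ← Nat.shiftLeft_eq, ← Nat.one_shiftLeft, ← Nat.shiftLeft_xor_distrib,
    Nat.shiftLeft_eq, Nat.one_shiftLeft, mul_comm]

lemma aNat_eq (m v : ℕ) :
    aNat m v = if 2 ^ (m + 1) ∣ v then v + 2 ^ m else if 2 ^ m ∣ v then v - 2 ^ m else v := by
  unfold aNat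
  by_cases hv : 2 ^ m ∣ v
  · obtain ⟨q, rfl⟩ := hv
    simp only [if_pos (dvd_mul_right _ _), two_pow_mul_xor_two_pow,
      two_pow_succ_dvd_two_pow_mul_iff]
    rcases Nat.even_or_odd q with hq | hq
    · rw [Nat.xor_one_of_even hq, if_pos (even_iff_two_dvd.mp hq), mul_add_one]
    · rw [Nat.xor_one_of_odd hq, if_neg (Nat.not_even_iff_odd.mpr hq ∘ even_iff_two_dvd.mpr),
        Nat.mul_sub_one]
  · rw [if_neg hv, if_neg (fun h => hv ((pow_dvd_pow 2 m.le_succ).trans h)), if_neg hv]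

lemma xNat_succ_aNat (m v : ℕ) : xNat (m + 1) (aNat m v) = xNat m v := by
  rw [aNat_eq]
  unfold xNat
  by_cases hv : 2 ^ m ∣ v
  · obtain ⟨q, rfl⟩ := hv
    simp only [if_pos (dvd_mul_right _ _), two_pow_succ_dvd_two_pow_mul_iff]
    have hodd (r : ℕ) : ¬ 2 ∣ 2 * r + 1 := by omega
    rcases Nat.even_or_odd' q with ⟨r, rfl | rfl⟩
    · simp only [dvd_mul_right, if_true, ← mul_add_one, two_pow_succ_dvd_two_pow_mul_iff, hodd,
        if_false]
    · simp only [hodd, if_false, ← Nat.mul_sub_one, Nat.add_sub_cancel,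
        two_pow_succ_dvd_two_pow_mul_iff, dvd_mul_right, if_true]
      ring
  · have hv' : ¬ 2 ^ (m + 1) ∣ v := fun h => hv ((pow_dvd_pow 2 m.le_succ).trans h)
    rw [if_neg hv', if_neg hv, if_neg hv, if_neg hv']

lemma xNat_aNat_relation (v : ℕ) :
    xNat 0 (xNat 0 (xNat 0 (aNat 1 (xNat 0 (xNat 2 v)))))
      = xNat 2 (xNat 2 (aNat 1 (xNat 0 (xNat 2 (xNat 0 v))))) := by
  simp only [aNat_eq, xNat]
  norm_num
  split_ifs <;> omega

lemma leafOfNat_surjective (n : ℕ) : Function.Surjective (leafOfNat n) := by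
  have hinj : Function.Injective fun v : Fin (2 ^ n) => leafOfNat n v := by
    intro v w h
    refine Fin.ext (Nat.eq_of_testBit_eq fun i => ?_)
    by_cases hi : i < n
    · exact congrFun h ⟨i, hi⟩
    · have hle : 2 ^ n ≤ 2 ^ i := Nat.pow_le_pow_right two_pos (not_lt.mp hi)
      rw [Nat.testBit_lt_two_pow (v.isLt.trans_le hle),
        Nat.testBit_lt_two_pow (w.isLt.trans_le hle)]
  have hbij := (Fintype.bijective_iff_injective_and_card _).mpr ⟨hinj, by simp⟩
  intro ℓ
  obtain ⟨v, hv⟩ := hbij.surjective ℓ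
  exact ⟨v, hv⟩

lemma leafOfNat_add_two_pow (n v : ℕ) : leafOfNat n (v + 2 ^ n) = leafOfNat n v := by
  funext t
  simp only [leafOfNat, Nat.add_comm v, Nat.testBit_two_pow_add_gt t.isLt]

lemma aEl_leafOfNat (n k v : ℕ) :
    (aEl n k : Equiv.Perm (Leaf n)) (leafOfNat n v) = leafOfNat n (aNat (n - k) v) := by
  funext t
  have hdvd : (∀ s : Fin n, (s : ℕ) < n - k → leafOfNat n v s = false) ↔ 2 ^ (n - k) ∣ v := by
    rw [two_pow_dvd_iff_testBit]
    exact ⟨fun h i hi => h ⟨i, by omega⟩ hi, fun h s hs => h s hs⟩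
  show aFun n k _ t = _
  simp only [aFun_apply, hdvd, aNat]
  by_cases h : 2 ^ (n - k) ∣ v <;> by_cases ht : (t : ℕ) = n - k <;>
    simp [h, ht, eq_comm (a := n - k), leafOfNat]

lemma xEl_succ (n k : ℕ) : xEl n (k + 1) = xEl n k * aEl n (k + 1) := by
  simp [xEl, List.range_succ]

lemma xEl_leafOfNat {n k : ℕ} (hk : k ≤ n) (v : ℕ) :
    (xEl n k : Equiv.Perm (Leaf n)) (leafOfNat n v) = leafOfNat n (xNat (n - k) v) := by
  induction k generalizing v with
  | zero =>
    simp only [xNat, Nat.sub_zero]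
    split_ifs
    · exact (leafOfNat_add_two_pow n v).symm
    · rfl
  | succ k ih =>
    rw [xEl_succ, Subgroup.coe_mul, Equiv.Perm.mul_apply, aEl_leafOfNat, ih (by omega),
      show n - k = n - (k + 1) + 1 by omega, xNat_succ_aNat]

lemma xEl_aEl_relation {n : ℕ} (hn : 2 ≤ n) :
    xEl n n ^ 3 * aEl n (n - 1) * xEl n n * xEl n (n - 2)
      = xEl n (n - 2) ^ 2 * aEl n (n - 1) * xEl n n * xEl n (n - 2) * xEl n n := by
  ext ℓ
  obtain ⟨v, rfl⟩ := leafOfNat_surjective n ℓ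
  simp only [Subgroup.coe_mul, Equiv.Perm.mul_apply, pow_succ, pow_zero, one_mul,
    aEl_leafOfNat, xEl_leafOfNat le_rfl, xEl_leafOfNat (Nat.sub_le n 2),
    show n - (n - 1) = 1 by omega, show n - (n - 2) = 2 by omega, Nat.sub_self]
  rw [xNat_aNat_relation]

open scoped commutatorElement

/-- in `W_n` (`n ≥ 2`), with `m_n = a_{n-1}(x_{n-2})^{x_n}`, one has
`x_n² = v_{n-4} · [x_n, m_n]⁻¹` where `v_{n-4} = x_{n-2}²` and `[x,y] = xyx⁻¹y⁻¹`;
equivalently `x_n² [x_n, m_n] = x_{n-2}²`. -/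
theorem xEl_sq_commutator (n : ℕ) (hn : 2 ≤ n) :
    (xEl n n) ^ 2 = (xEl n (n - 2)) ^ 2 * ⁅xEl n n, mEl n⁆⁻¹ ∧
    (xEl n n) ^ 2 * ⁅xEl n n, mEl n⁆ = (xEl n (n - 2)) ^ 2 := by
  have h : xEl n n ^ 2 * ⁅xEl n n, mEl n⁆ = xEl n (n - 2) ^ 2 := by
    rw [commutatorElement_def, mEl]
    calc _ = (xEl n n ^ 3 * aEl n (n - 1) * xEl n n * xEl n (n - 2))
          * (aEl n (n - 1) * xEl n n * xEl n (n - 2) * xEl n n)⁻¹ := by group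
      _ = xEl n (n - 2) ^ 2 := by rw [xEl_aEl_relation hn]; group
  exact ⟨eq_mul_inv_of_mul_eq h, h⟩
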